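/- arXiv:2501.12500 — 4 statements merged into one kernel-verified Lean document; each statement's English description precedes it below -/
import Mathlib

section
/- Let M be an n×n real matrix that is lower triangular with all diagonal entries non-zero. If P and Q are n×n permutation matrices such that P M Q has all diagonal entries non-zero, then P M Q being diagonal-nonzero under simultaneous row and column permutations forces the permutations to be equal: if the matrix obtained by permuting the rows of M by a permutation σ and the columns by a permutation τ has all diagonal entries non-zero, then σ = τ. -/
/-!
Triangularity turns `M (σ i) (τ i) ≠ 0` into `τ i ≤ σ i`, so `σ * τ⁻¹` moves no point downwards.
A permutation of a finite poset with this property is the identity: along an orbit the points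
would increase, yet every orbit returns to its starting point.
-/

namespace Equiv.Perm

variable {α : Type*} [PartialOrder α]

theorem le_pow_apply_of_forall_le_apply {π : Perm α} (h : ∀ x, x ≤ π x) (x : α) :
    ∀ k : ℕ, x ≤ (π ^ k) x
  | 0 => le_rfl
  | k + 1 => by
    rw [pow_succ', mul_apply]
    exact (le_pow_apply_of_forall_le_apply h x k).trans (h _)

variable [Finite α]

theorem eq_one_of_forall_le_apply {π : Perm α} (h : ∀ x, x ≤ π x) : π = 1 := by
  ext x
  obtain ⟨k, hk⟩ : ∃ k, orderOf π = k + 1 := Nat.exists_eq_add_one.mpr (orderOf_pos π)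
  have hreturn : (π ^ k) (π x) = x := by
    rw [← mul_apply, ← pow_succ, ← hk, pow_orderOf_eq_one, one_apply]
  have hle : π x ≤ x := (le_pow_apply_of_forall_le_apply h (π x) k).trans_eq hreturn
  exact le_antisymm hle (h x)

theorem eq_of_forall_apply_le {σ τ : Perm α} (h : ∀ x, τ x ≤ σ x) : σ = τ :=
  mul_inv_eq_one.mp <| eq_one_of_forall_le_apply fun y => by
    simpa only [coe_inv, apply_symm_apply, mul_apply] using h (τ⁻¹ y)

end Equiv.Perm

theorem lingam_lemma1_general {n : ℕ} (M : Matrix (Fin n) (Fin n) ℝ)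
    (hlow : ∀ i j : Fin n, i < j → M i j = 0)
    (σ τ : Equiv.Perm (Fin n))
    (hperm : ∀ i : Fin n, M (σ i) (τ i) ≠ 0) :
    σ = τ :=
  Equiv.Perm.eq_of_forall_apply_le fun i => not_lt.mp fun hlt => hperm i (hlow _ _ hlt)

/-- Lemma 1 of LiNGAM (Shimizu et al. 2006): if `M` is lower triangular with
nonzero diagonal and simultaneously permuting rows by `σ` and columns by `τ`
yields a matrix with nonzero diagonal, then `σ = τ`. -/
theorem lingam_lemma1 {n : ℕ} (M : Matrix (Fin n) (Fin n) ℝ)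
    (hlow : ∀ i j : Fin n, i < j → M i j = 0)
    (hdiag : ∀ i : Fin n, M i i ≠ 0)
    (σ τ : Equiv.Perm (Fin n))
    (hperm : ∀ i : Fin n, M (σ i) (τ i) ≠ 0) :
    σ = τ :=
  lingam_lemma1_general M hlow σ τ hperm
end

section
/- Composition of injective bounded linear operators is injective, and consequently, if L₁ = L₂ ∘ D ∘ L₂^{-1} ∘ L₃ with L₂ injective with densely defined inverse, L₃ injective, and D injective, then L₁ is injective; moreover from the operator equation L_{x_t; x_{t+1}|x_{t−1}} = L_{x_{t+1}|z_t} ∘ D_{x_t|z_t} ∘ L_{z_t|x_{t−1}} with L_{x_{t+1}|z_t} injective, one can solve uniquely L_{z_t|x_{t−1}} = L_{x_{t+1}|z_t}^{-1} ∘ L_{x_{t+1}|x_{t−1}}. -/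
/-- Operator-algebra step of Theorem "blk idn": with bounded linear operators
`L₂ : E →L F` injective, `D : E →L E` injective, and `L₃ : G →L F` injective,
if `Lz : G →L E` satisfies `L₂ ∘ Lz = L₃` (so `Lz = L₂⁻¹ ∘ L₃`) and
`L₁ = L₂ ∘ D ∘ Lz`, then `L₁` is injective, and `Lz` is the unique solution of
`L₂ ∘ Lz = L₃`. -/
theorem operator_composition_injective
    {E F G : Type*}
    [NormedAddCommGroup E] [NormedSpace ℝ E]
    [NormedAddCommGroup F] [NormedSpace ℝ F]
    [NormedAddCommGroup G] [NormedSpace ℝ G]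
    (L₂ : E →L[ℝ] F) (D : E →L[ℝ] E) (L₃ : G →L[ℝ] F) (Lz : G →L[ℝ] E)
    (hL₂ : Function.Injective L₂)
    (hD : Function.Injective D)
    (hL₃ : Function.Injective L₃)
    (hfac : L₂.comp Lz = L₃)
    (L₁ : G →L[ℝ] F)
    (hL₁ : L₁ = L₂.comp (D.comp Lz)) :
    Function.Injective L₁ ∧
      ∀ Lz' : G →L[ℝ] E, L₂.comp Lz' = L₃ → Lz' = Lz := by
  have hLz : Function.Injective Lz :=
    Function.Injective.of_comp (f := L₂) (by rwa [← ContinuousLinearMap.coe_comp, hfac])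
  subst hL₁
  exact ⟨hL₂.comp (hD.comp hLz),
    fun Lz' h => ContinuousLinearMap.cancel_left hL₂ (h.trans hfac.symm)⟩
end

section
/- Let J_m, J_m^L, D_m, D_m^L be n×n real matrices and P a permutation matrix, with J_m^L invertible lower triangular, D_m^L = diag(J_m^L) invertible, D_m invertible diagonal, and J_m = P J_m^L (D_m^L)^{-1} Pᵀ D_m. If J_ĝ = J_m J_h^{-1} where J_h is a monomial matrix J_h = QΛ (Q permutation, Λ invertible diagonal) such that P (D_m^L)^{-1} Pᵀ D_m J_h = I, then J_h is diagonal (Q = I) and consequently supp(J_ĝ) = supp(J_m). -/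
/-!
Conjugating a diagonal matrix by a permutation matrix gives a diagonal matrix, and so does
inverting one; hence the normalisation hypothesis reads `D * P_τ * Λ = 1` with `D`, `Λ` diagonal.
The `(j, j)` entry of `D * P_τ * Λ` vanishes unless `τ j = j`, so `τ` is the identity and
`J_h = Λ`. Right multiplication by an invertible diagonal matrix only rescales columns, so it
preserves the support.
-/

open Matrix

/-- The permutation matrix of a permutation `σ` of `Fin n`. -/
def permMat {n : ℕ} (σ : Equiv.Perm (Fin n)) : Matrix (Fin n) (Fin n) ℝ :=
  Matrix.of fun i j => if σ j = i then 1 else 0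

section PermMat

variable {n : ℕ}

theorem permMat_eq_submatrix_one (σ : Equiv.Perm (Fin n)) :
    permMat σ = (1 : Matrix (Fin n) (Fin n) ℝ).submatrix σ.symm id := by
  ext i j
  simp only [permMat, of_apply, submatrix_apply, id_eq, one_apply, Equiv.symm_apply_eq,
    @eq_comm _ i]

theorem permMat_refl : permMat (Equiv.refl (Fin n)) = 1 := by
  simp [permMat_eq_submatrix_one]

theorem permMat_mul (σ : Equiv.Perm (Fin n)) (M : Matrix (Fin n) (Fin n) ℝ) :
    permMat σ * M = M.submatrix σ.symm id := by
  simpa [permMat_eq_submatrix_one] using one_submatrix_mul (⇑σ.symm) (Equiv.refl _) M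

theorem mul_transpose_permMat (σ : Equiv.Perm (Fin n)) (M : Matrix (Fin n) (Fin n) ℝ) :
    M * (permMat σ)ᵀ = M.submatrix id σ.symm := by
  simpa [permMat_eq_submatrix_one] using mul_submatrix_one (Equiv.refl _) (⇑σ.symm) M

theorem permMat_mul_diagonal_mul_transpose (σ : Equiv.Perm (Fin n)) (d : Fin n → ℝ) :
    permMat σ * diagonal d * (permMat σ)ᵀ = diagonal (d ∘ σ.symm) := by
  rw [permMat_mul, mul_transpose_permMat, submatrix_submatrix]
  exact submatrix_diagonal_equiv d σ.symm

theorem eq_refl_of_diagonal_mul_permMat_mul_diagonal_eq_one {τ : Equiv.Perm (Fin n)}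
    {a b : Fin n → ℝ} (h : diagonal a * permMat τ * diagonal b = 1) :
    τ = Equiv.refl (Fin n) := by
  refine Equiv.ext fun j => by_contra fun hj => ?_
  rw [Equiv.refl_apply] at hj
  have hjj := congrFun₂ h j j
  simp [diagonal_mul, mul_diagonal, permMat, hj] at hjj

end PermMat

theorem mul_inv_diagonal_apply_ne_zero_iff {K m n : Type*} [Field K] [Fintype n] [DecidableEq n]
    {d : n → K} (hd : ∀ j, d j ≠ 0) (M : Matrix m n K) (i : m) (j : n) :
    (M * (diagonal d)⁻¹) i j ≠ 0 ↔ M i j ≠ 0 := by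
  have hinv : (diagonal d)⁻¹ = diagonal fun j => (d j)⁻¹ :=
    inv_eq_right_inv (by simp [diagonal_mul_diagonal, hd])
  simp [hinv, mul_diagonal, hd]

theorem permutation_elimination_general {n : ℕ}
    (JmL : Matrix (Fin n) (Fin n) ℝ)
    (DmL : Matrix (Fin n) (Fin n) ℝ)
    (hDmL : DmL = Matrix.diagonal (fun i => JmL i i))
    (dm : Fin n → ℝ)
    (σ τ : Equiv.Perm (Fin n)) (lam : Fin n → ℝ) (hlam : ∀ i, lam i ≠ 0)
    (Jm Jh Jg : Matrix (Fin n) (Fin n) ℝ)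
    (hJh : Jh = permMat τ * Matrix.diagonal lam)
    (hunit : permMat σ * DmL⁻¹ * (permMat σ)ᵀ * Matrix.diagonal dm * Jh = 1)
    (hJg : Jg = Jm * Jh⁻¹) :
    τ = Equiv.refl (Fin n) ∧
      ∀ i j : Fin n, Jg i j ≠ 0 ↔ Jm i j ≠ 0 := by
  rw [hDmL, inv_diagonal, permMat_mul_diagonal_mul_transpose, diagonal_mul_diagonal, hJh,
    ← mul_assoc] at hunit
  have hτ := eq_refl_of_diagonal_mul_permMat_mul_diagonal_eq_one hunit
  rw [hτ, permMat_refl, one_mul] at hJh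
  exact ⟨hτ, fun i j => hJg ▸ hJh ▸ mul_inv_diagonal_apply_ne_zero_iff hlam Jm i j⟩

/-- Permutation-elimination step of Theorem "ident B": with `J_m^L` invertible
lower triangular, `D_m^L = diag(J_m^L)`, `D_m` invertible diagonal, `P` the
permutation matrix of `σ`, `J_m = P J_m^L (D_m^L)⁻¹ Pᵀ D_m`, and a monomial
residual indeterminacy `J_h = Q Λ` with `P (D_m^L)⁻¹ Pᵀ D_m J_h = I`, the
permutation `Q` must be the identity, and consequently
`J_ĝ = J_m J_h⁻¹` has the same support as `J_m`. -/
theorem permutation_elimination {n : ℕ}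
    (JmL : Matrix (Fin n) (Fin n) ℝ)
    (hJmL_low : ∀ i j : Fin n, i < j → JmL i j = 0)
    (hJmL_diag : ∀ i : Fin n, JmL i i ≠ 0)
    (hJmL_inv : IsUnit JmL)
    (DmL : Matrix (Fin n) (Fin n) ℝ)
    (hDmL : DmL = Matrix.diagonal (fun i => JmL i i))
    (dm : Fin n → ℝ) (hdm : ∀ i, dm i ≠ 0)
    (σ τ : Equiv.Perm (Fin n)) (lam : Fin n → ℝ) (hlam : ∀ i, lam i ≠ 0)
    (Jm Jh Jg : Matrix (Fin n) (Fin n) ℝ)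
    (hJm : Jm = permMat σ * JmL * DmL⁻¹ * (permMat σ)ᵀ * Matrix.diagonal dm)
    (hJh : Jh = permMat τ * Matrix.diagonal lam)
    (hunit : permMat σ * DmL⁻¹ * (permMat σ)ᵀ * Matrix.diagonal dm * Jh = 1)
    (hJg : Jg = Jm * Jh⁻¹) :
    τ = Equiv.refl (Fin n) ∧
      ∀ i j : Fin n, Jg i j ≠ 0 ↔ Jm i j ≠ 0 :=
  permutation_elimination_general JmL DmL hDmL dm σ τ lam hlam Jm Jh Jg hJh hunit hJg
end

section
/- Let A be an n×n matrix with non-negative entries and define h(A) = tr[(I + (1/n) A)ⁿ] − n. Then h(A) ≥ 0, and h(A) = 0 if and only if the directed graph with edge j → i whenever A_{ij} > 0 is acyclic (equivalently, tr(A^k) = 0 for all 1 ≤ k ≤ n). -/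
open Matrix Finset

/-!
For entrywise nonnegative `A`, `(A ^ k) i j > 0` exactly when there is a walk of length `k`
from `j` to `i`, so `tr (A ^ k) > 0` exactly when there is a closed walk of length `k`; by
pigeonhole every closed walk can be shortened to one of length at most `n`. Expanding
binomially, `tr ((1 + n⁻¹ A) ^ n) - n = ∑_{k=1}^n C(n,k) n⁻ᵏ tr (A ^ k)`, a sum of nonnegative
terms with positive coefficients.
-/

namespace Matrix

variable {ι R : Type*}

section Walks

variable [Zero R] [LT R] {A : Matrix ι ι R}

/-- `c 0 → c 1 → ⋯ → c k` is a walk in the digraph with an edge `j → i` whenever `0 < A i j`. -/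
def IsWalk (A : Matrix ι ι R) (k : ℕ) (c : ℕ → ι) : Prop :=
  ∀ l < k, 0 < A (c (l + 1)) (c l)

def HasCycle (A : Matrix ι ι R) : Prop :=
  ∃ (k : ℕ) (c : ℕ → ι), 0 < k ∧ c k = c 0 ∧ A.IsWalk k c

lemma isWalk_succ_iff {k : ℕ} {c : ℕ → ι} :
    A.IsWalk (k + 1) c ↔ A.IsWalk k c ∧ 0 < A (c (k + 1)) (c k) :=
  Nat.forall_lt_succ_right

lemma isWalk_update_of_lt [DecidableEq ι] {k m : ℕ} (hkm : k < m) {c : ℕ → ι} {i : ι} :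
    A.IsWalk k (Function.update c m i) ↔ A.IsWalk k c := by
  refine forall₂_congr fun l hl => ?_
  rw [Function.update_of_ne (by omega), Function.update_of_ne (by omega)]

lemma IsWalk.shift {k a m : ℕ} {c : ℕ → ι} (hc : A.IsWalk k c) (hm : a + m ≤ k) :
    A.IsWalk m (fun l => c (a + l)) :=
  fun l hl => hc (a + l) (by omega)

/-- Pigeonhole on the first `card ι + 1` vertices of the walk. -/
lemma HasCycle.exists_le_card [Fintype ι] (h : A.HasCycle) :
    ∃ (k : ℕ) (c : ℕ → ι), 0 < k ∧ k ≤ Fintype.card ι ∧ c k = c 0 ∧ A.IsWalk k c := by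
  obtain ⟨k, c, hk, hck, hc⟩ := h
  rcases le_or_gt k (Fintype.card ι) with hkn | hnk
  · exact ⟨k, c, hk, hkn, hck, hc⟩
  obtain ⟨a, b, hab, heq⟩ := Fintype.exists_ne_map_eq_of_card_lt
    (fun a : Fin (Fintype.card ι + 1) => c a) (by simp)
  wlog hlt : (a : ℕ) < b generalizing a b
  · exact this b a hab.symm heq.symm (by omega)
  refine ⟨b - a, fun l => c (a + l), by omega, by omega, ?_, hc.shift (by omega)⟩
  simpa [Nat.add_sub_cancel' hlt.le] using heq.symm

end Walks

section Binomial

variable [Fintype ι] [DecidableEq ι] [CommRing R]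

lemma trace_one_add_smul_pow (A : Matrix ι ι R) (c : R) (n : ℕ) :
    trace ((1 + c • A) ^ n) = ∑ k ∈ range (n + 1), c ^ k * n.choose k * trace (A ^ k) := by
  rw [add_comm, (Commute.one_right (c • A)).add_pow, trace_sum]
  refine sum_congr rfl fun k _ => ?_
  rw [one_pow, mul_one, smul_pow, ← Nat.cast_comm, ← nsmul_eq_mul, trace_smul, trace_smul,
    nsmul_eq_mul, smul_eq_mul]
  ring

lemma trace_one_add_smul_pow_sub_card (A : Matrix ι ι R) (c : R) (n : ℕ) :
    trace ((1 + c • A) ^ n) - (Fintype.card ι : R) =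
      ∑ k ∈ range n, c ^ (k + 1) * n.choose (k + 1) * trace (A ^ (k + 1)) := by
  rw [trace_one_add_smul_pow, sum_range_succ']
  simp [trace_one]

end Binomial

section NonnegMatrix

variable [Fintype ι] [DecidableEq ι] [Ring R] [LinearOrder R] [IsStrictOrderedRing R]
  {A : Matrix ι ι R}

lemma trace_pow_nonneg (hA : ∀ i j, 0 ≤ A i j) (k : ℕ) : 0 ≤ trace (A ^ k) :=
  sum_nonneg fun i _ => pow_apply_nonneg hA k i i

lemma pow_apply_pos_iff_exists_isWalk (hA : ∀ i j, 0 ≤ A i j) (k : ℕ) (i j : ι) :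
    0 < (A ^ k) i j ↔ ∃ c : ℕ → ι, c 0 = j ∧ c k = i ∧ A.IsWalk k c := by
  induction k generalizing i with
  | zero =>
    rcases eq_or_ne i j with rfl | hij
    · exact iff_of_true (by simp) ⟨fun _ => i, rfl, rfl, fun l hl => absurd hl l.not_lt_zero⟩
    · simp only [pow_zero, one_apply_ne hij, lt_irrefl, false_iff]
      rintro ⟨c, rfl, rfl, -⟩
      exact hij rfl
  | succ k ih =>
    have hterm : ∀ x, 0 ≤ A i x * (A ^ k) x j := fun x =>
      mul_nonneg (hA i x) (pow_apply_nonneg hA k x j)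
    rw [pow_succ', mul_apply, sum_pos_iff_of_nonneg fun x _ => hterm x]
    constructor
    · rintro ⟨x, -, hx⟩
      have hAx : 0 < A i x := (hA i x).lt_of_ne fun h => by simp [← h] at hx
      have hpow : 0 < (A ^ k) x j :=
        (pow_apply_nonneg hA k x j).lt_of_ne fun h => by simp [← h] at hx
      obtain ⟨c, hc0, hck, hc⟩ := (ih x).1 hpow
      refine ⟨Function.update c (k + 1) i, by simp [hc0], by simp, ?_⟩
      rw [isWalk_succ_iff, isWalk_update_of_lt k.lt_succ_self]
      simpa [hck] using ⟨hc, hAx⟩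
    · rintro ⟨c, rfl, rfl, hc⟩
      rw [isWalk_succ_iff] at hc
      exact ⟨c k, mem_univ _, mul_pos hc.2 ((ih _).2 ⟨c, rfl, rfl, hc.1⟩)⟩

lemma trace_pow_pos_iff_exists_closed_isWalk (hA : ∀ i j, 0 ≤ A i j) (k : ℕ) :
    0 < trace (A ^ k) ↔ ∃ c : ℕ → ι, c k = c 0 ∧ A.IsWalk k c := by
  simp only [trace, diag_apply, sum_pos_iff_of_nonneg fun i _ => pow_apply_nonneg hA k i i,
    mem_univ, true_and, pow_apply_pos_iff_exists_isWalk hA]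
  constructor
  · rintro ⟨i, c, hc0, hck, hc⟩
    exact ⟨c, hck.trans hc0.symm, hc⟩
  · rintro ⟨c, hck, hc⟩
    exact ⟨c 0, c, rfl, hck, hc⟩

lemma hasCycle_iff_exists_trace_pow_pos (hA : ∀ i j, 0 ≤ A i j) :
    A.HasCycle ↔ ∃ k, 1 ≤ k ∧ k ≤ Fintype.card ι ∧ 0 < trace (A ^ k) := by
  constructor
  · intro h
    obtain ⟨k, c, hk, hkn, hck, hc⟩ := h.exists_le_card
    exact ⟨k, hk, hkn, (trace_pow_pos_iff_exists_closed_isWalk hA k).2 ⟨c, hck, hc⟩⟩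
  · rintro ⟨k, hk, -, hpos⟩
    obtain ⟨c, hck, hc⟩ := (trace_pow_pos_iff_exists_closed_isWalk hA k).1 hpos
    exact ⟨k, c, hk, hck, hc⟩

lemma not_hasCycle_iff_trace_pow_eq_zero (hA : ∀ i j, 0 ≤ A i j) :
    ¬ A.HasCycle ↔ ∀ k, 1 ≤ k → k ≤ Fintype.card ι → trace (A ^ k) = 0 := by
  simp only [hasCycle_iff_exists_trace_pow_pos hA, not_exists, not_and, not_lt]
  exact forall₃_congr fun k _ _ => (trace_pow_nonneg hA k).ge_iff_eq'

end NonnegMatrix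

section Penalty

variable [Fintype ι] [DecidableEq ι]

lemma trace_one_add_smul_pow_sub_card_nonneg [CommRing R] [LinearOrder R] [IsStrictOrderedRing R]
    {A : Matrix ι ι R} (hA : ∀ i j, 0 ≤ A i j) {c : R} (hc : 0 ≤ c) (n : ℕ) :
    0 ≤ trace ((1 + c • A) ^ n) - (Fintype.card ι : R) := by
  rw [trace_one_add_smul_pow_sub_card]
  exact sum_nonneg fun k _ => mul_nonneg (by positivity) (trace_pow_nonneg hA (k + 1))

lemma trace_one_add_inv_smul_pow_sub_card_eq_zero_iff [Field R] [LinearOrder R]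
    [IsStrictOrderedRing R] {A : Matrix ι ι R} (hA : ∀ i j, 0 ≤ A i j) (n : ℕ) :
    trace ((1 + (n : R)⁻¹ • A) ^ n) - (Fintype.card ι : R) = 0 ↔
      ∀ k, 1 ≤ k → k ≤ n → trace (A ^ k) = 0 := by
  have hcoeff (k : ℕ) (hk : k < n) : 0 < (n : R)⁻¹ ^ (k + 1) * n.choose (k + 1) := by
    have := Nat.choose_pos (n := n) (k := k + 1) (by omega)
    have : 0 < n := by omega
    positivity
  rw [trace_one_add_smul_pow_sub_card, sum_eq_zero_iff_of_nonneg fun k hk =>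
    mul_nonneg (hcoeff k (mem_range.1 hk)).le (trace_pow_nonneg hA (k + 1))]
  simp only [mem_range]
  constructor
  · intro h k hk hkn
    obtain ⟨k, rfl⟩ : ∃ m, k = m + 1 := ⟨k - 1, by omega⟩
    exact (mul_eq_zero_iff_left (hcoeff k (by omega)).ne').1 (h k (by omega))
  · intro h k hk
    rw [h (k + 1) (by omega) (by omega), mul_zero]

end Penalty

end Matrix

/-- DAG-ness characterization underlying the acyclicity penalty of Yu et al.
(2019): for a nonnegative matrix `A`, `h(A) = tr[(I + (1/n)A)ⁿ] − n` is
nonnegative, and vanishes iff the directed graph with an edge `j → i` whenever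
`A_{ij} > 0` is acyclic, which holds iff `tr(A^k) = 0` for all `1 ≤ k ≤ n`. -/
theorem dag_trace_characterization {n : ℕ}
    (A : Matrix (Fin n) (Fin n) ℝ)
    (hA : ∀ i j : Fin n, 0 ≤ A i j)
    (h : ℝ)
    (hdef : h = Matrix.trace ((1 + ((n : ℝ)⁻¹) • A) ^ n) - n) :
    0 ≤ h ∧
    (h = 0 ↔
      ¬ ∃ (k : ℕ) (c : ℕ → Fin n), 0 < k ∧ c k = c 0 ∧
        ∀ l < k, 0 < A (c (l + 1)) (c l)) ∧
    ((¬ ∃ (k : ℕ) (c : ℕ → Fin n), 0 < k ∧ c k = c 0 ∧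
        ∀ l < k, 0 < A (c (l + 1)) (c l)) ↔
      ∀ k : ℕ, 1 ≤ k → k ≤ n → Matrix.trace (A ^ k) = 0) := by
  have hacyclic := not_hasCycle_iff_trace_pow_eq_zero hA
  have hvanish := trace_one_add_inv_smul_pow_sub_card_eq_zero_iff hA n
  have hnonneg := trace_one_add_smul_pow_sub_card_nonneg hA (inv_nonneg.2 n.cast_nonneg) n
  rw [Fintype.card_fin] at hacyclic hvanish hnonneg
  rw [hdef]
  exact ⟨hnonneg, hvanish.trans hacyclic.symm, hacyclic⟩
end
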